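/- For every matrix G ∈ ℝ^{3×3} one has lim_{t→0} dist(Id + tG, SO(3))/|t| = |sym G|, where dist denotes the distance induced by the Frobenius norm; that is, to first order the distance of Id + tG from the rotation group is the Frobenius norm of the symmetric part of tG. -/

import Mathlib

/- Frobenius norm instances on matrices -/
attribute [local instance] Matrix.frobeniusNormedAddCommGroup Matrix.frobeniusNormedSpace

open Matrix

/-- The rotation group SO(3). -/
def SO3 : Set (Matrix (Fin 3) (Fin 3) ℝ) :=
  {R | Rᵀ * R = 1 ∧ R.det = 1}

/-- The symmetric part of a matrix. -/
noncomputable def symPart (F : Matrix (Fin 3) (Fin 3) ℝ) : Matrix (Fin 3) (Fin 3) ℝ :=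
  (1 / 2 : ℝ) • (F + Fᵀ)

/-!
For a rotation `R`, `FᵀF - 1 = (F - R)ᵀ F + Rᵀ (F - R)` and left multiplication by `Rᵀ` is a
Frobenius isometry, so `‖FᵀF - 1‖ ≤ ‖F - R‖ (2 + ‖F - 1‖)`. For `F = 1 + tG` the left side is
`2 |t| ‖sym G‖ + O(t²)`, which bounds the distance from below. Conversely, `exp (t skew G)` is a
rotation (orthogonal, with determinant `det (exp (t skew G / 2))² ≥ 0`) whose distance to `1 + tG`
is `|t| ‖sym G‖ + o(t)`.
-/

open Filter Topology NormedSpace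

theorem tendsto_norm_exp_smul_sub_one_sub_smul_div_abs {𝔸 : Type*} [NormedRing 𝔸]
    [NormedAlgebra ℝ 𝔸] [CompleteSpace 𝔸] (K : 𝔸) :
    Tendsto (fun t : ℝ => ‖exp (t • K) - 1 - t • K‖ / |t|) (𝓝 0) (𝓝 0) := by
  have hd := hasDerivAt_exp_smul_const (𝕂 := ℝ) K 0
  simp only [zero_smul, exp_zero, one_mul] at hd
  simpa [Real.norm_eq_abs] using
    ((hasDerivAt_iff_isLittleO.mp hd).norm_norm).tendsto_div_nhds_zero

namespace Matrix

variable {m n : Type*} [Fintype m] [Fintype n]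

theorem frobenius_norm_sq_eq_trace (A : Matrix m n ℝ) : ‖A‖ ^ 2 = trace (Aᵀ * A) := by
  rw [frobenius_norm_def, ← Real.sqrt_eq_rpow, Real.sq_sqrt (by positivity)]
  simp only [Real.rpow_two, Real.norm_eq_abs, sq, abs_mul_abs_self, trace, diag, mul_apply,
    transpose_apply]
  exact Finset.sum_comm

variable [DecidableEq n]

theorem frobenius_norm_mul_of_transpose_mul_self_eq_one {R : Matrix n n ℝ} (hR : Rᵀ * R = 1)
    (X : Matrix n m ℝ) : ‖R * X‖ = ‖X‖ := by
  refine (pow_left_inj₀ (norm_nonneg _) (norm_nonneg _) two_ne_zero).mp ?_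
  rw [frobenius_norm_sq_eq_trace, frobenius_norm_sq_eq_trace, transpose_mul, Matrix.mul_assoc,
    ← Matrix.mul_assoc Rᵀ, hR, Matrix.one_mul]

/-- Splitting `F = 1 + (F - 1)` in `(F - R)ᵀ F` avoids the factor `‖1‖ = √n` of the Frobenius
norm. -/
theorem norm_transpose_mul_self_sub_one_le {F R : Matrix n n ℝ} (hR : Rᵀ * R = 1) :
    ‖Fᵀ * F - 1‖ ≤ ‖F - R‖ * (2 + ‖F - 1‖) := by
  have hRRt : Rᵀᵀ * Rᵀ = 1 := by rw [transpose_transpose]; exact mul_eq_one_comm.mp hR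
  have hsplit : Fᵀ * F - 1 = (F - R)ᵀ + (F - R)ᵀ * (F - 1) + Rᵀ * (F - R) := by
    rw [transpose_sub, Matrix.mul_sub, Matrix.sub_mul, Matrix.sub_mul, Matrix.mul_sub, hR,
      Matrix.mul_one, Matrix.mul_one]
    abel
  calc ‖Fᵀ * F - 1‖ ≤ ‖(F - R)ᵀ‖ + ‖(F - R)ᵀ‖ * ‖F - 1‖ + ‖Rᵀ * (F - R)‖ := by
        rw [hsplit]
        exact norm_add₃_le.trans (by gcongr; exact frobenius_norm_mul _ _)
    _ = ‖F - R‖ * (2 + ‖F - 1‖) := by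
        rw [frobenius_norm_transpose, frobenius_norm_mul_of_transpose_mul_self_eq_one hRRt]
        ring

theorem transpose_exp_mul_exp_of_transpose_eq_neg {K : Matrix n n ℝ} (hK : Kᵀ = -K) :
    (exp K)ᵀ * exp K = 1 := by
  rw [← exp_transpose, hK, ← exp_add_of_commute _ _ (Commute.neg_left (Commute.refl K)),
    neg_add_cancel, exp_zero]

theorem det_exp_of_transpose_eq_neg {K : Matrix n n ℝ} (hK : Kᵀ = -K) : (exp K).det = 1 := by
  have hsq : (exp K).det ^ 2 = 1 := by
    simpa [det_mul, det_transpose, sq] using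
      congrArg det (transpose_exp_mul_exp_of_transpose_eq_neg hK)
  have hnonneg : 0 ≤ (exp K).det := by
    have hhalf : exp K = exp ((1 / 2 : ℝ) • K) * exp ((1 / 2 : ℝ) • K) := by
      rw [← exp_add_of_commute _ _ (Commute.refl _), ← add_smul]
      norm_num
    rw [hhalf, det_mul]
    exact mul_self_nonneg _
  nlinarith

end Matrix

noncomputable def skewPart (F : Matrix (Fin 3) (Fin 3) ℝ) : Matrix (Fin 3) (Fin 3) ℝ :=
  (1 / 2 : ℝ) • (F - Fᵀ)

theorem symPart_add_skewPart (F : Matrix (Fin 3) (Fin 3) ℝ) : symPart F + skewPart F = F := by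
  unfold symPart skewPart
  module

theorem transpose_skewPart (F : Matrix (Fin 3) (Fin 3) ℝ) : (skewPart F)ᵀ = -skewPart F := by
  simp only [skewPart, transpose_smul, transpose_sub, transpose_transpose]
  module

theorem exp_mem_SO3 {K : Matrix (Fin 3) (Fin 3) ℝ} (hK : Kᵀ = -K) : exp K ∈ SO3 :=
  ⟨transpose_exp_mul_exp_of_transpose_eq_neg hK, det_exp_of_transpose_eq_neg hK⟩

theorem norm_transpose_mul_self_sub_one_div_le_infDist_SO3 (F : Matrix (Fin 3) (Fin 3) ℝ) :
    ‖Fᵀ * F - 1‖ / (2 + ‖F - 1‖) ≤ Metric.infDist F SO3 := by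
  refine (Metric.le_infDist ⟨1, by simp [SO3]⟩).mpr fun R hR => ?_
  rw [div_le_iff₀ (by positivity), dist_eq_norm]
  exact norm_transpose_mul_self_sub_one_le hR.1

theorem one_add_smul_transpose_mul_self_sub_one (G : Matrix (Fin 3) (Fin 3) ℝ) (t : ℝ) :
    (1 + t • G)ᵀ * (1 + t • G) - 1 = (2 * t) • symPart G + t ^ 2 • (Gᵀ * G) := by
  simp only [symPart, transpose_add, transpose_one, transpose_smul, Matrix.add_mul,
    Matrix.mul_add, Matrix.one_mul, Matrix.mul_one, Matrix.smul_mul, Matrix.mul_smul]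
  module

theorem le_infDist_one_add_smul_SO3 (G : Matrix (Fin 3) (Fin 3) ℝ) (t : ℝ) :
    |t| * (2 * ‖symPart G‖ - |t| * ‖Gᵀ * G‖) / (2 + |t| * ‖G‖) ≤
      Metric.infDist (1 + t • G) SO3 := by
  refine le_trans ?_ (norm_transpose_mul_self_sub_one_div_le_infDist_SO3 _)
  rw [add_sub_cancel_left, norm_smul, Real.norm_eq_abs, one_add_smul_transpose_mul_self_sub_one]
  gcongr
  calc |t| * (2 * ‖symPart G‖ - |t| * ‖Gᵀ * G‖)
      = ‖(2 * t) • symPart G‖ - ‖t ^ 2 • (Gᵀ * G)‖ := by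
        rw [norm_smul, norm_smul, Real.norm_eq_abs, Real.norm_eq_abs, abs_mul, abs_two, abs_pow]
        ring
    _ ≤ _ := norm_sub_le_norm_add _ _

theorem infDist_one_add_smul_SO3_le (G : Matrix (Fin 3) (Fin 3) ℝ) (t : ℝ) :
    Metric.infDist (1 + t • G) SO3 ≤
      |t| * ‖symPart G‖ + ‖exp (t • skewPart G) - 1 - t • skewPart G‖ := by
  have hK : (t • skewPart G)ᵀ = -(t • skewPart G) := by
    rw [transpose_smul, transpose_skewPart, smul_neg]
  refine (Metric.infDist_le_dist_of_mem (exp_mem_SO3 hK)).trans ?_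
  have hsplit : 1 + t • G - exp (t • skewPart G) =
      t • symPart G - (exp (t • skewPart G) - 1 - t • skewPart G) := by
    nth_rw 1 [← symPart_add_skewPart G]
    module
  rw [dist_eq_norm, hsplit]
  exact (norm_sub_le _ _).trans_eq (by rw [norm_smul, Real.norm_eq_abs])

/-- for every matrix `G`, `dist(Id + tG, SO(3))/|t| → |sym G|` as `t → 0`,
where `dist` is induced by the Frobenius norm. -/
theorem dist_to_SO3_first_order
    (G : Matrix (Fin 3) (Fin 3) ℝ) :
    Filter.Tendsto (fun t : ℝ => Metric.infDist (1 + t • G) SO3 / |t|)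
      (nhdsWithin 0 {0}ᶜ) (nhds ‖symPart G‖) := by
  set K := skewPart G
  have hlower : Tendsto (fun t : ℝ => (2 * ‖symPart G‖ - |t| * ‖Gᵀ * G‖) / (2 + |t| * ‖G‖))
      (𝓝 0) (𝓝 ‖symPart G‖) := by
    have hcont : Continuous fun t : ℝ => (2 * ‖symPart G‖ - |t| * ‖Gᵀ * G‖) / (2 + |t| * ‖G‖) :=
      .div (by fun_prop) (by fun_prop) fun t => by positivity
    simpa using hcont.tendsto 0
  have hupper : Tendsto (fun t : ℝ => ‖symPart G‖ + ‖exp (t • K) - 1 - t • K‖ / |t|)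
      (𝓝 0) (𝓝 ‖symPart G‖) := by
    have := tendsto_const_nhds (x := ‖symPart G‖) |>.add
      (@tendsto_norm_exp_smul_sub_one_sub_smul_div_abs _ frobeniusNormedRing
        frobeniusNormedAlgebra (FiniteDimensional.complete ℝ _) K)
    rwa [add_zero] at this
  refine tendsto_of_tendsto_of_tendsto_of_le_of_le' (hlower.mono_left nhdsWithin_le_nhds)
    (hupper.mono_left nhdsWithin_le_nhds) ?_ ?_ <;>
    filter_upwards [self_mem_nhdsWithin] with t (ht : t ≠ 0)
  · rw [le_div_iff₀ (abs_pos.2 ht)]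
    refine le_of_eq_of_le ?_ (le_infDist_one_add_smul_SO3 G t)
    ring
  · rw [div_le_iff₀ (abs_pos.2 ht), add_mul, div_mul_cancel₀ _ (abs_ne_zero.2 ht), mul_comm]
    exact infDist_one_add_smul_SO3_le G t
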